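/- Let n and C be integers with 1 ≤ n ≤ C, and let K' := { g ∈ GL₂(F) : g₁₁ ∈ 1 + pⁿ, g₁₂ ∈ p^C, g₂₁ ∈ ϖ^{n−C}·o, g₂₂ ∈ o^× }. Assume L/F is ramified and v(a) = 0, let u₀ ∈ o satisfy c·u₀² + b·u₀ + a ∈ p, and set u₀' := −u₀/a ∈ o^×. Then the elements t(1, y) for y in a set of representatives of { y ∈ o/p^C : y − u₀' ∉ p }, together with t(1, u₀' + y) for y in a set of representatives of p/p^{C+1}, together with t(x, 1) for x in a set of representatives of p/p^C, form a complete irredundant set of representatives for the cosets of T(F) ∩ Z(F)·K' in T(F): every element of T(F) lies in t·(T(F) ∩ Z(F)·K') for exactly one t in this family. -/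

import Mathlib

open scoped Pointwise
open Matrix

noncomputable section

abbrev Zm0 : Type := WithZero (Multiplicative ℤ)

/-- `ev n` is the value (in `ℤₘ₀ = WithZero (Multiplicative ℤ)`) of an element of additive
valuation `n`; thus `x ∈ 𝔭^n` iff `v x ≤ ev n`, `x ∈ 𝔬` iff `v x ≤ ev 0`, and `x ∈ 𝔬^×` iff
`v x = ev 0`. -/
def ev (n : ℤ) : Zm0 := ((Multiplicative.ofAdd (-n) : Multiplicative ℤ) : Zm0)

variable {F : Type*} [Field F]

/-- the matrix t(x,y) = [[x, cy],[−ay, x−by]] -/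
def tmat (a b c x y : F) : Matrix (Fin 2) (Fin 2) F :=
  !![x, c * y; -(a * y), x - b * y]

/-- the torus T(F) ⊆ GL₂(F), as a set of matrices -/
def TSet (a b c : F) : Set (Matrix (Fin 2) (Fin 2) F) :=
  {m | ∃ x y : F, x ^ 2 - b * x * y + a * c * y ^ 2 ≠ 0 ∧ m = tmat a b c x y}

/-- Z(F): the invertible scalar matrices -/
def ZF (F : Type*) [Field F] : Set (Matrix (Fin 2) (Fin 2) F) :=
  {m | ∃ z : F, z ≠ 0 ∧ m = z • (1 : Matrix (Fin 2) (Fin 2) F)}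

/-- the compact subgroup
K' = { g : g₁₁ ∈ 1 + 𝔭ⁿ, g₁₂ ∈ 𝔭^C, g₂₁ ∈ ϖ^{n−C}·𝔬, g₂₂ ∈ 𝔬^× } -/
def Kp (v : Valuation F Zm0) (n C : ℕ) : Set (Matrix (Fin 2) (Fin 2) F) :=
  {g | v (g 0 0 - 1) ≤ ev n ∧ v (g 0 1) ≤ ev C ∧
       v (g 1 0) ≤ ev ((n : ℤ) - C) ∧ v (g 1 1) = ev 0}


/-!
Normalise `g` by the centre to `t(1, w)` with `w ∈ 𝔬`, or to `t(p, 1)` with `p ∈ 𝔭`. Then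
`g ∈ t(x', y') (T ∩ Z K')` becomes the condition `Y ∈ 𝔭^C X` on the coordinates of
`t(X, Y) = N(x', y') t(x', y')⁻¹ g`.

Ramification forces an Eisenstein situation: as `𝔬_L = 𝔬 + 𝔬β` contains a uniformizer of `L`,
no `β - f` with `f ∈ F` lies in `𝔭_L²`. The two factors `u₀ + β` and `c (u₀ + β̄)` of
`c u₀² + b u₀ + a` are of this form, so `v(c u₀² + b u₀ + a) = 1` and `v(2 c u₀ + b) ≥ 1`.
Expanding `1 - b r + a c r w` around `r = u₀'`, it is then a unit when `r - u₀'` is, and has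
valuation exactly `1` when `r ≡ u₀' (mod 𝔭)` and `w ≡ r (mod 𝔭²)`. This decides which of the
three families meets the coset of `g`, and pins the representative down modulo `𝔭^C`, resp.
`𝔭^{C+1}`.
-/

lemma ev_eq_exp (n : ℤ) : ev n = WithZero.exp (-n) := rfl

@[simp] lemma ev_zero : ev 0 = 1 := rfl

lemma ev_ne_zero (n : ℤ) : ev n ≠ 0 := WithZero.exp_ne_zero

lemma ev_injective : Function.Injective ev := fun _ _ h => neg_injective (WithZero.exp_injective h)

lemma ev_add (m n : ℤ) : ev (m + n) = ev m * ev n := by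
  rw [ev_eq_exp, ev_eq_exp, ev_eq_exp, neg_add, WithZero.exp_add]

lemma ev_le_ev {m n : ℤ} : ev m ≤ ev n ↔ n ≤ m := by
  rw [ev_eq_exp, ev_eq_exp, WithZero.exp_le_exp, neg_le_neg_iff]

lemma ev_lt_ev {m n : ℤ} : ev m < ev n ↔ n < m := by
  rw [ev_eq_exp, ev_eq_exp, WithZero.exp_lt_exp, neg_lt_neg_iff]

lemma ev_pow (m : ℤ) (k : ℕ) : ev m ^ k = ev (k * m) := by
  rw [ev_eq_exp, ev_eq_exp, ← WithZero.exp_nsmul, nsmul_eq_mul, mul_neg]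

lemma le_ev_add_one_of_lt {z : Zm0} {m : ℤ} (h : z < ev m) : z ≤ ev (m + 1) := by
  rwa [← WithZero.lt_mul_exp_iff_le (ev_ne_zero _), ev_eq_exp, ← WithZero.exp_add,
    neg_add, neg_add_cancel_right]

lemma eq_ev_zero_of_not_le {z : Zm0} (h0 : z ≤ ev 0) (h1 : ¬ z ≤ ev 1) : z = ev 0 :=
  h0.eq_or_lt.resolve_right fun h => h1 (by simpa using le_ev_add_one_of_lt h)

lemma le_ev_of_mul_le_ev_add {x y : Zm0} {k m : ℤ} (hy : ev m ≤ y) (hxy : x * y ≤ ev (k + m)) :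
    x ≤ ev k :=
  le_of_mul_le_mul_right ((mul_le_mul' le_rfl hy).trans (hxy.trans_eq (ev_add k m)))
    (zero_lt_iff.mpr (ev_ne_zero m))

lemma sq_ne_ev_one (z : Zm0) : z ^ 2 ≠ ev 1 := by
  intro h
  rcases eq_or_ne z 0 with rfl | hz
  · exact ev_ne_zero 1 (by simpa using h.symm)
  · obtain ⟨k, rfl⟩ : ∃ k, z = WithZero.exp k := ⟨_, (WithZero.exp_log hz).symm⟩
    rw [← WithZero.exp_nsmul, ev_eq_exp, WithZero.exp_inj, nsmul_eq_mul] at h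
    omega

section Valuation

variable {v : Valuation F Zm0}

lemma valuation_mul_le_ev {x y : F} {m k : ℤ} (hx : v x ≤ ev m) (hy : v y ≤ ev k) :
    v (x * y) ≤ ev (m + k) := by
  rw [Valuation.map_mul, ev_add]
  exact mul_le_mul' hx hy

lemma valuation_le_ev_of_le {x : F} {m k : ℤ} (hx : v x ≤ ev m) (hkm : k ≤ m) : v x ≤ ev k :=
  hx.trans (ev_le_ev.mpr hkm)

lemma valuation_sub_eq_of_le {x y : F} (hx : v x = ev 0) (hy : v y ≤ ev 1) :
    v (x - y) = ev 0 := by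
  rw [v.map_sub_eq_of_lt_left (hx ▸ hy.trans_lt (ev_lt_ev.mpr one_pos)), hx]

lemma valuation_div_le_ev_iff {X Y : F} {k : ℤ} (hX : X ≠ 0) :
    v (Y / X) ≤ ev k ↔ v Y ≤ ev k * v X := by
  rw [map_div₀, div_le_iff₀ (zero_lt_iff.mpr ((Valuation.ne_zero_iff v).mpr hX))]

lemma valuation_mul_le_ev_mul_iff {z X Y : F} (hz : z ≠ 0) {k : ℤ} :
    v (z * Y) ≤ ev k * v (z * X) ↔ v Y ≤ ev k * v X := by
  rw [Valuation.map_mul, Valuation.map_mul, mul_left_comm,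
    mul_le_mul_iff_right₀ (zero_lt_iff.mpr ((Valuation.ne_zero_iff v).mpr hz))]

lemma not_le_ev_mul_of_unit {C : ℕ} {X Y : F} (hC : 1 ≤ C) (hY : v Y = ev 0)
    (hX : v X ≤ ev 0) : ¬ v Y ≤ ev C * v X := by
  intro h
  have := h.trans (mul_le_mul' le_rfl hX)
  rw [hY, ← ev_add, ev_le_ev] at this
  omega

end Valuation

lemma tmat_mul (a b c x y x' y' : F) :
    tmat a b c x y * tmat a b c x' y' =
      tmat a b c (x * x' - a * c * (y * y')) (x * y' + x' * y - b * (y * y')) := by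
  ext i j
  fin_cases i <;> fin_cases j <;> simp [tmat, Matrix.mul_apply] <;> ring

lemma smul_tmat (a b c x y z : F) : z • tmat a b c x y = tmat a b c (z * x) (z * y) := by
  ext i j
  fin_cases i <;> fin_cases j <;> simp [tmat] <;> ring

lemma det_tmat (a b c x y : F) : (tmat a b c x y).det = x ^ 2 - b * x * y + a * c * y ^ 2 := by
  simp [tmat, Matrix.det_fin_two]
  ring

lemma tmat_inj {a b c x y x' y' : F} (hc : c ≠ 0) :
    tmat a b c x y = tmat a b c x' y' ↔ x = x' ∧ y = y' := by
  refine ⟨fun h => ⟨?_, ?_⟩, fun h => h.1 ▸ h.2 ▸ rfl⟩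
  · simpa [tmat] using congrFun (congrFun h 0) 0
  · simpa [tmat, hc] using congrFun (congrFun h 0) 1

lemma ne_zero_or_ne_zero_of_norm_ne_zero {a b c x y : F}
    (hN : x ^ 2 - b * x * y + a * c * y ^ 2 ≠ 0) : x ≠ 0 ∨ y ≠ 0 :=
  not_and_or.mp fun ⟨hx, hy⟩ => hN (by simp [hx, hy])

lemma norm_ne_zero_of_forall_sq_ne {a b c x y : F} (hd : ∀ r : F, r ^ 2 ≠ b ^ 2 - 4 * (a * c))
    (hxy : x ≠ 0 ∨ y ≠ 0) : x ^ 2 - b * x * y + a * c * y ^ 2 ≠ 0 := by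
  intro hN
  rcases eq_or_ne y 0 with rfl | hy
  · exact hxy.resolve_right (not_not.mpr rfl)
      (pow_eq_zero_iff two_ne_zero |>.mp (by simpa using hN))
  · refine hd ((2 * x - b * y) / y) ?_
    field_simp
    linear_combination 4 * hN

lemma smul_mem_TSet {a b c z : F} (hz : z ≠ 0) {u : Matrix (Fin 2) (Fin 2) F}
    (hu : u ∈ TSet a b c) : z • u ∈ TSet a b c := by
  obtain ⟨x, y, hN, rfl⟩ := hu
  refine ⟨z * x, z * y, ?_, smul_tmat a b c x y z⟩
  convert mul_ne_zero (pow_ne_zero 2 hz) hN using 1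
  ring

lemma smul_mem_ZF_mul {z : F} (hz : z ≠ 0) {S : Set (Matrix (Fin 2) (Fin 2) F)}
    {u : Matrix (Fin 2) (Fin 2) F} (hu : u ∈ ZF F * S) : z • u ∈ ZF F * S := by
  obtain ⟨_, ⟨z', hz', rfl⟩, k, hk, rfl⟩ := hu
  refine ⟨(z * z') • 1, ⟨z * z', mul_ne_zero hz hz', rfl⟩, k, hk, ?_⟩
  simp [smul_smul]

def MemCoset (v : Valuation F Zm0) (a b c : F) (n C : ℕ) (m g : Matrix (Fin 2) (Fin 2) F) :
    Prop :=
  ∃ u ∈ TSet a b c ∩ (ZF F * Kp v n C), g = m * u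

section Coset

variable {v : Valuation F Zm0} {a b c : F} {n C : ℕ}

lemma memCoset_smul_iff {z : F} (hz : z ≠ 0) {m g : Matrix (Fin 2) (Fin 2) F} :
    MemCoset v a b c n C m (z • g) ↔ MemCoset v a b c n C m g := by
  constructor
  · rintro ⟨u, ⟨hT, hZK⟩, h⟩
    refine ⟨z⁻¹ • u, ⟨smul_mem_TSet (inv_ne_zero hz) hT, smul_mem_ZF_mul (inv_ne_zero hz) hZK⟩, ?_⟩
    rw [mul_smul_comm, ← h, smul_smul, inv_mul_cancel₀ hz, one_smul]
  · rintro ⟨u, ⟨hT, hZK⟩, rfl⟩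
    exact ⟨z • u, ⟨smul_mem_TSet hz hT, smul_mem_ZF_mul hz hZK⟩, (mul_smul_comm z m u).symm⟩

lemma tmat_one_mem_Kp (hc : v c = ev 0) (ha : v a ≤ ev 0) (hb : v b ≤ ev 0) (hn : 1 ≤ n)
    (hnC : n ≤ C) {t : F} (ht : v t ≤ ev C) : tmat a b c 1 t ∈ Kp v n C := by
  have hC : (1 : ℤ) ≤ C := by exact_mod_cast hn.trans hnC
  refine ⟨by simp [tmat], by simpa [tmat, hc] using ht, ?_, ?_⟩
  · simp only [tmat, of_apply, cons_val', cons_val_one, cons_val_zero, empty_val',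
      cons_val_fin_one, Valuation.map_neg, Valuation.map_mul]
    calc v a * v t ≤ ev 0 * ev C := mul_le_mul' ha ht
      _ ≤ ev (n - C) := by rw [← ev_add, ev_le_ev]; omega
  · have hlt : v (b * t) < 1 := by
      rw [Valuation.map_mul, ← ev_zero]
      calc v b * v t ≤ ev 0 * ev C := mul_le_mul' hb ht
        _ < ev 0 := by rw [← ev_add, ev_lt_ev]; omega
    simpa [tmat] using v.map_one_sub_of_lt hlt

lemma tmat_mem_ZF_mul_Kp_iff (hc : v c = ev 0) (ha : v a ≤ ev 0) (hb : v b ≤ ev 0) (hn : 1 ≤ n)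
    (hnC : n ≤ C) {X Y : F} (hXY : X ≠ 0 ∨ Y ≠ 0) :
    tmat a b c X Y ∈ ZF F * Kp v n C ↔ v Y ≤ ev C * v X := by
  constructor
  · rintro ⟨_, ⟨z, hz, rfl⟩, k, ⟨hk00, hk01, -, -⟩, h⟩
    dsimp only at h
    have hk : k = tmat a b c (z⁻¹ * X) (z⁻¹ * Y) := by
      rw [← smul_tmat, ← h, smul_mul_assoc, one_mul, smul_smul, inv_mul_cancel₀ hz, one_smul]
    simp only [hk, tmat, of_apply, cons_val', cons_val_zero, cons_val_one, empty_val',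
      cons_val_fin_one] at hk00 hk01
    rw [Valuation.map_mul, hc, ev_zero, one_mul] at hk01
    have hX : v X = v z := by
      have := v.map_eq_of_sub_lt (hk00.trans_lt (by rw [v.map_one, ← ev_zero, ev_lt_ev]; omega))
      rw [Valuation.map_mul, map_inv₀, v.map_one] at this
      exact ((inv_mul_eq_one₀ ((Valuation.ne_zero_iff v).mpr hz)).mp this).symm
    rw [hX, ← valuation_div_le_ev_iff hz, div_eq_inv_mul]
    exact hk01
  · intro hYX
    have hX : X ≠ 0 := by
      rintro rfl
      simp only [map_zero, mul_zero, le_zero_iff, map_eq_zero] at hYX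
      simp_all
    refine ⟨X • 1, ⟨X, hX, rfl⟩, tmat a b c 1 (Y / X),
      tmat_one_mem_Kp hc ha hb hn hnC ((valuation_div_le_ev_iff hX).mpr hYX), ?_⟩
    dsimp only
    rw [smul_mul_assoc, one_mul, smul_tmat, mul_one, mul_div_cancel₀ _ hX]

lemma memCoset_tmat_iff (hc : v c = ev 0) (ha : v a ≤ ev 0) (hb : v b ≤ ev 0) (hn : 1 ≤ n)
    (hnC : n ≤ C) {x y x' y' : F} (hN : x ^ 2 - b * x * y + a * c * y ^ 2 ≠ 0)
    (hN' : x' ^ 2 - b * x' * y' + a * c * y' ^ 2 ≠ 0) :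
    MemCoset v a b c n C (tmat a b c x' y') (tmat a b c x y) ↔
      v (x' * y - x * y') ≤ ev C * v (x * x' - b * (x * y') + a * c * (y * y')) := by
  have hc0 : c ≠ 0 := (Valuation.ne_zero_iff v).mp (hc ▸ ev_ne_zero 0)
  set N' := x' ^ 2 - b * x' * y' + a * c * y' ^ 2
  set X := x * x' - b * (x * y') + a * c * (y * y')
  set Y := x' * y - x * y'
  -- `t(X, Y) = t(x' - b y', -y') t(x, y)`, and `t(x', y') t(x' - b y', -y') = N'`
  have hmul : tmat a b c x y = tmat a b c x' y' * tmat a b c (X / N') (Y / N') := by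
    rw [tmat_mul, tmat_inj hc0]
    constructor <;> field_simp <;> ring
  have hnorm : (X / N') ^ 2 - b * (X / N') * (Y / N') + a * c * (Y / N') ^ 2 ≠ 0 := by
    convert div_ne_zero hN hN' using 1
    field_simp
    ring
  rw [← valuation_mul_le_ev_mul_iff (inv_ne_zero hN'), ← div_eq_inv_mul, ← div_eq_inv_mul,
    ← tmat_mem_ZF_mul_Kp_iff hc ha hb hn hnC (ne_zero_or_ne_zero_of_norm_ne_zero hnorm)]
  constructor
  · rintro ⟨_, ⟨⟨x₂, y₂, -, rfl⟩, hZK⟩, h⟩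
    have hdet : IsUnit (tmat a b c x' y') := by
      rw [Matrix.isUnit_iff_isUnit_det, det_tmat]
      exact hN'.isUnit
    rwa [← hdet.mul_left_cancel (h.symm.trans hmul)]
  · exact fun hZK => ⟨_, ⟨⟨X / N', Y / N', hnorm, rfl⟩, hZK⟩, hmul⟩

lemma memCoset_tmat_one_iff (hc : v c = ev 0) (ha : v a ≤ ev 0) (hb : v b ≤ ev 0) (hn : 1 ≤ n)
    (hnC : n ≤ C) (hd : ∀ r : F, r ^ 2 ≠ b ^ 2 - 4 * (a * c)) {w x y : F} (hxy : x ≠ 0 ∨ y ≠ 0) :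
    MemCoset v a b c n C (tmat a b c x y) (tmat a b c 1 w) ↔
      v (x * w - y) ≤ ev C * v (x - b * y + a * c * (w * y)) := by
  rw [memCoset_tmat_iff hc ha hb hn hnC (norm_ne_zero_of_forall_sq_ne hd (Or.inl one_ne_zero))
    (norm_ne_zero_of_forall_sq_ne hd hxy)]
  simp only [one_mul]

end Coset

section Ramified

variable {L : Type*} [Field L] [Algebra F L] {v : Valuation F Zm0} {vL : Valuation L Zm0}

/-- If `β - f` were in `𝔭_L²`, every `s + tβ ∈ 𝔬_L` would have even valuation or lie in `𝔭_L²`,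
leaving no room for a uniformizer of `L`. -/
lemma ev_one_le_valuation_sub_algebraMap {β ϖL : L}
    (hint : ∀ z : L, vL z ≤ ev 0 →
      ∃ s t : F, v s ≤ ev 0 ∧ v t ≤ ev 0 ∧ z = algebraMap F L s + algebraMap F L t * β)
    (halg : ∀ x : F, vL (algebraMap F L x) = v x ^ 2) (hϖL : vL ϖL = ev 1) (f : F) :
    ev 1 ≤ vL (β - algebraMap F L f) := by
  by_contra! h
  obtain ⟨s, t, -, ht, hϖ⟩ := hint ϖL (hϖL ▸ ev_le_ev.mpr zero_le_one)
  have hsmall : vL (algebraMap F L t * (β - algebraMap F L f)) < vL ϖL := by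
    rw [Valuation.map_mul, halg, hϖL]
    calc v t ^ 2 * vL (β - algebraMap F L f) ≤ 1 * vL (β - algebraMap F L f) :=
          mul_le_mul_left (pow_le_one₀ zero_le ht) _
      _ < ev 1 := by rwa [one_mul]
  have hsplit : algebraMap F L (s + t * f) = ϖL - algebraMap F L t * (β - algebraMap F L f) := by
    rw [hϖ, map_add, map_mul]
    ring
  apply sq_ne_ev_one (v (s + t * f))
  rw [← halg, hsplit, vL.map_sub_eq_of_lt_left hsmall, hϖL]

lemma eisenstein_of_ramified [CharZero F] {a b c u₀ : F} {sqd β ϖL : L} (hc : v c = ev 0)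
    (hsqd : sqd ^ 2 = algebraMap F L (b ^ 2 - 4 * (a * c)))
    (hβ : β = (algebraMap F L b + sqd) / (2 * algebraMap F L c))
    (hint : ∀ z : L, vL z ≤ ev 0 →
      ∃ s t : F, v s ≤ ev 0 ∧ v t ≤ ev 0 ∧ z = algebraMap F L s + algebraMap F L t * β)
    (halg : ∀ x : F, vL (algebraMap F L x) = v x ^ 2) (hϖL : vL ϖL = ev 1)
    (hu₀ : v (c * u₀ ^ 2 + b * u₀ + a) ≤ ev 1) :
    v (c * u₀ ^ 2 + b * u₀ + a) = ev 1 ∧ v (2 * c * u₀ + b) ≤ ev 1 := by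
  have := charZero_of_injective_algebraMap (algebraMap F L).injective
  set A := algebraMap F L
  have hc0 : c ≠ 0 := (Valuation.ne_zero_iff v).mp (hc ▸ ev_ne_zero 0)
  have hAc0 : A c ≠ 0 := (map_ne_zero A).mpr hc0
  have hAc : vL (A c) = 1 := by rw [halg, hc, ev_zero, one_pow]
  have hquad := (quadratic_eq_zero_iff hAc0 (s := sqd) (b := -A b) (c := A a)
    (by rw [discrim, ← sq, hsqd]; simp [map_ofNat]; ring) β).mpr (Or.inl (by rw [hβ, neg_neg]))
  -- `θ` and `θ₂ / c` are the two roots `u₀ + β`, `u₀ + β̄` of `c X² - (2 c u₀ + b) X + E`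
  set θ := β - A (-u₀)
  set θ₂ := A (c * u₀ + b) - A c * β
  have hprod : vL θ * vL θ₂ = v (c * u₀ ^ 2 + b * u₀ + a) ^ 2 := by
    rw [← Valuation.map_mul, ← halg]
    congr 1
    simp only [θ, θ₂, map_add, map_mul, map_pow, map_neg]
    linear_combination -hquad
  have hsum : A c * θ + θ₂ = A (2 * c * u₀ + b) := by
    simp only [θ, θ₂, map_add, map_mul, map_neg, map_ofNat]
    ring
  have h1 : ev 1 ≤ vL θ := ev_one_le_valuation_sub_algebraMap hint halg hϖL (-u₀)
  have h2 : ev 1 ≤ vL θ₂ := by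
    have hθ₂ : θ₂ = -A c * (β - A ((c * u₀ + b) / c)) := by
      simp only [θ₂, map_div₀]
      field_simp
      ring
    rw [hθ₂, Valuation.map_mul, Valuation.map_neg, hAc, one_mul]
    exact ev_one_le_valuation_sub_algebraMap hint halg hϖL _
  have hE : v (c * u₀ ^ 2 + b * u₀ + a) = ev 1 := by
    refine le_antisymm hu₀ ((pow_le_pow_iff_left₀ zero_le zero_le two_ne_zero).mp ?_)
    rw [← hprod, sq]
    exact mul_le_mul' h1 h2
  have hprod' : vL θ * vL θ₂ ≤ ev (1 + 1) := by rw [hprod, hE, ev_pow]; norm_num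
  have hθ : vL θ ≤ ev 1 := le_ev_of_mul_le_ev_add h2 hprod'
  have hθ₂ : vL θ₂ ≤ ev 1 := le_ev_of_mul_le_ev_add h1 (mul_comm (vL θ) _ ▸ hprod')
  have hB : v (2 * c * u₀ + b) ^ 2 < 1 := by
    rw [← halg, ← hsum]
    refine (vL.map_add_le ?_ hθ₂).trans_lt (ev_lt_ev.mpr zero_lt_one)
    rwa [Valuation.map_mul, hAc, one_mul]
  have hB' : v (2 * c * u₀ + b) < ev 0 := (pow_lt_one_iff_of_nonneg zero_le two_ne_zero).mp hB
  exact ⟨hE, by simpa using le_ev_add_one_of_lt hB'⟩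

end Ramified

lemma one_sub_add_eq_taylor (a b c u₀' r w : F) :
    1 - b * r + a * c * (w * r) = (1 - b * u₀' + a * c * u₀' ^ 2)
      + (a * c * (r - u₀') ^ 2 - (b - 2 * a * c * u₀') * (r - u₀') + a * c * (r * (w - r))) := by
  ring

section Expansion

variable {v : Valuation F Zm0} {a b c u₀' r w : F}

variable (hB : v (b - 2 * a * c * u₀') ≤ ev 1) (hr : v r ≤ ev 0)
include hB hr

lemma valuation_one_sub_add_eq_ev_zero (hac : v (a * c) = ev 0)
    (hN₀ : v (1 - b * u₀' + a * c * u₀' ^ 2) ≤ ev 1) (ht : v (r - u₀') = ev 0)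
    (hwr : v (w - r) ≤ ev 1) : v (1 - b * r + a * c * (w * r)) = ev 0 := by
  have hsq : v (a * c * (r - u₀') ^ 2) = ev 0 := by simp [hac, ht]
  have hrest : v (1 - b * u₀' + a * c * u₀' ^ 2 - (b - 2 * a * c * u₀') * (r - u₀')
      + a * c * (r * (w - r))) ≤ ev 1 := by
    refine v.map_add_le (v.map_sub_le hN₀ ?_) ?_
    · simpa [ht] using valuation_mul_le_ev hB ht.le
    · simpa using valuation_mul_le_ev hac.le (valuation_mul_le_ev hr hwr)
  rw [show 1 - b * r + a * c * (w * r) = a * c * (r - u₀') ^ 2 + (1 - b * u₀' + a * c * u₀' ^ 2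
      - (b - 2 * a * c * u₀') * (r - u₀') + a * c * (r * (w - r))) by ring,
    v.map_add_eq_of_lt_left (hsq ▸ hrest.trans_lt (ev_lt_ev.mpr one_pos)), hsq]

variable (hac : v (a * c) ≤ ev 0)
include hac

lemma valuation_taylor_tail_le {m : ℤ} (hm : m ≤ 2) (ht : v (r - u₀') ≤ ev 1)
    (hwr : v (w - r) ≤ ev m) :
    v (a * c * (r - u₀') ^ 2 - (b - 2 * a * c * u₀') * (r - u₀') + a * c * (r * (w - r)))
      ≤ ev m := by
  refine v.map_add_le (v.map_sub_le ?_ ?_) ?_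
  · rw [sq]
    exact valuation_le_ev_of_le (valuation_mul_le_ev hac (valuation_mul_le_ev ht ht)) (by omega)
  · exact valuation_le_ev_of_le (valuation_mul_le_ev hB ht) (by omega)
  · simpa using valuation_mul_le_ev hac (valuation_mul_le_ev hr hwr)

lemma valuation_one_sub_add_le_ev_one (hN₀ : v (1 - b * u₀' + a * c * u₀' ^ 2) ≤ ev 1)
    (ht : v (r - u₀') ≤ ev 1) (hwr : v (w - r) ≤ ev 1) :
    v (1 - b * r + a * c * (w * r)) ≤ ev 1 := by
  rw [one_sub_add_eq_taylor a b c u₀']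
  exact v.map_add_le hN₀ (valuation_taylor_tail_le hB hr hac (by norm_num) ht hwr)

lemma valuation_one_sub_add_eq_ev_one (hN₀ : v (1 - b * u₀' + a * c * u₀' ^ 2) = ev 1)
    (ht : v (r - u₀') ≤ ev 1) (hwr : v (w - r) ≤ ev 2) :
    v (1 - b * r + a * c * (w * r)) = ev 1 := by
  have htail := valuation_taylor_tail_le hB hr hac le_rfl ht hwr
  rw [one_sub_add_eq_taylor a b c u₀', v.map_add_eq_of_lt_left (hN₀ ▸ htail.trans_lt
    (ev_lt_ev.mpr one_lt_two)), hN₀]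

end Expansion

def IsCosetRep (a b c u₀' : F) (Y₁ Y₂ Y₃ : Finset F) (m : Matrix (Fin 2) (Fin 2) F) : Prop :=
  (∃ y ∈ Y₁, m = tmat a b c 1 y) ∨ (∃ y ∈ Y₂, m = tmat a b c 1 (u₀' + y)) ∨
    (∃ x ∈ Y₃, m = tmat a b c x 1)

section Representatives

variable {v : Valuation F Zm0} {a b c u₀' : F} {n C : ℕ} {Y₁ Y₂ Y₃ : Finset F}

lemma valuation_one_sub_add_le_one (hac : v (a * c) ≤ ev 0) (hb : v b ≤ ev 0) {r w : F}
    (hr : v r ≤ ev 0) (hw : v w ≤ ev 0) : v (1 - b * r + a * c * (w * r)) ≤ ev 0 := by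
  refine v.map_add_le (v.map_sub_le (by simp) ?_) ?_
  · simpa using valuation_mul_le_ev hb hr
  · simpa using valuation_mul_le_ev hac (valuation_mul_le_ev hw hr)

lemma not_memCoset_tmat_mem_one (hc : v c = ev 0) (ha : v a = ev 0) (hb : v b ≤ ev 0)
    (hn : 1 ≤ n) (hnC : n ≤ C) (hd : ∀ r : F, r ^ 2 ≠ b ^ 2 - 4 * (a * c)) {w x : F}
    (hw : v w ≤ ev 0) (hx : v x ≤ ev 1) :
    ¬ MemCoset v a b c n C (tmat a b c x 1) (tmat a b c 1 w) := by
  have hac : v (a * c) ≤ ev 0 := by simp [ha, hc]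
  rw [memCoset_tmat_one_iff hc ha.le hb hn hnC hd (Or.inr one_ne_zero)]
  refine not_le_ev_mul_of_unit (hn.trans hnC) ?_
    (v.map_add_le (v.map_sub_le (valuation_le_ev_of_le hx zero_le_one) (by simpa using hb)) ?_)
  · rw [v.map_sub_swap]
    exact valuation_sub_eq_of_le v.map_one (by simpa using valuation_mul_le_ev hx hw)
  · simpa using valuation_mul_le_ev hac hw

lemma not_memCoset_tmat_one_mem (hc : v c = ev 0) (ha : v a = ev 0) (hb : v b ≤ ev 0)
    (hn : 1 ≤ n) (hnC : n ≤ C) (hd : ∀ r : F, r ^ 2 ≠ b ^ 2 - 4 * (a * c)) {p r : F}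
    (hp : v p ≤ ev 1) (hr : v r ≤ ev 0) :
    ¬ MemCoset v a b c n C (tmat a b c 1 r) (tmat a b c p 1) := by
  have hac : v (a * c) ≤ ev 0 := by simp [ha, hc]
  rw [memCoset_tmat_iff hc ha.le hb hn hnC (norm_ne_zero_of_forall_sq_ne hd (Or.inr one_ne_zero))
    (norm_ne_zero_of_forall_sq_ne hd (Or.inl one_ne_zero))]
  refine not_le_ev_mul_of_unit (hn.trans hnC) ?_ (v.map_add_le (v.map_sub_le ?_ ?_) ?_)
  · simpa using valuation_sub_eq_of_le v.map_one (valuation_mul_le_ev hp hr)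
  · simpa using valuation_le_ev_of_le hp zero_le_one
  · simpa using valuation_le_ev_of_le (valuation_mul_le_ev hb (valuation_mul_le_ev hp hr))
      zero_le_one
  · simpa using valuation_mul_le_ev hac hr
lemma existsUnique_rep_of_unit (hc : v c = ev 0) (ha : v a = ev 0) (hb : v b ≤ ev 0) (hn : 1 ≤ n)
    (hnC : n ≤ C) (hd : ∀ r : F, r ^ 2 ≠ b ^ 2 - 4 * (a * c))
    (hB : v (b - 2 * a * c * u₀') ≤ ev 1) (hN₀ : v (1 - b * u₀' + a * c * u₀' ^ 2) ≤ ev 1)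
    (hu₀' : v u₀' ≤ ev 0)
    (hY₁ : ∀ y ∈ Y₁, v y ≤ ev 0 ∧ ¬ v (y - u₀') ≤ ev 1)
    (hY₁rep : ∀ y : F, v y ≤ ev 0 → ¬ v (y - u₀') ≤ ev 1 → ∃! r, r ∈ Y₁ ∧ v (y - r) ≤ ev C)
    (hY₂ : ∀ y ∈ Y₂, v y ≤ ev 1) (hY₃ : ∀ x ∈ Y₃, v x ≤ ev 1) {w : F} (hw : v w ≤ ev 0)
    (hwu : v (w - u₀') = ev 0) :
    ∃! m, IsCosetRep a b c u₀' Y₁ Y₂ Y₃ m ∧ MemCoset v a b c n C m (tmat a b c 1 w) := by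
  have hC : (1 : ℤ) ≤ C := by exact_mod_cast hn.trans hnC
  have hac : v (a * c) = ev 0 := by simp [ha, hc]
  have hcoset := fun {x y : F} (h : x ≠ 0 ∨ y ≠ 0) =>
    memCoset_tmat_one_iff (n := n) hc ha.le hb hn hnC hd (w := w) h
  obtain ⟨r, ⟨hrY, hwr⟩, hr_uniq⟩ := hY₁rep w hw (by rw [hwu, ev_le_ev]; omega)
  refine ⟨tmat a b c 1 r, ⟨Or.inl ⟨r, hrY, rfl⟩, ?_⟩, ?_⟩
  · have hwr' : v (w - r) ≤ ev 1 := valuation_le_ev_of_le hwr hC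
    have hru : v (r - u₀') = ev 0 := by
      rw [show r - u₀' = (w - u₀') - (w - r) by ring]
      exact valuation_sub_eq_of_le hwu hwr'
    rw [hcoset (Or.inl one_ne_zero), one_mul,
      valuation_one_sub_add_eq_ev_zero hB (hY₁ r hrY).1 hac hN₀ hru hwr', ev_zero, mul_one]
    exact hwr
  rintro _ ⟨⟨r', hr'Y, rfl⟩ | ⟨s, hs, rfl⟩ | ⟨x, hx, rfl⟩, hm⟩
  · rw [hcoset (Or.inl one_ne_zero), one_mul] at hm
    rw [hr_uniq r' ⟨hr'Y, ?_⟩]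
    have := hm.trans (mul_le_mul' le_rfl
      (valuation_one_sub_add_le_one hac.le hb (hY₁ r' hr'Y).1 hw))
    rwa [ev_zero, mul_one] at this
  · rw [hcoset (Or.inl one_ne_zero), one_mul, show w - (u₀' + s) = (w - u₀') - s by ring] at hm
    refine absurd hm (not_le_ev_mul_of_unit (hn.trans hnC)
      (valuation_sub_eq_of_le hwu (hY₂ s hs)) (valuation_one_sub_add_le_one hac.le hb ?_ hw))
    exact v.map_add_le hu₀' (valuation_le_ev_of_le (hY₂ s hs) zero_le_one)
  · exact absurd hm (not_memCoset_tmat_mem_one hc ha hb hn hnC hd hw (hY₃ x hx))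

lemma existsUnique_rep_of_mem (hc : v c = ev 0) (ha : v a = ev 0) (hb : v b ≤ ev 0) (hn : 1 ≤ n)
    (hnC : n ≤ C) (hd : ∀ r : F, r ^ 2 ≠ b ^ 2 - 4 * (a * c))
    (hB : v (b - 2 * a * c * u₀') ≤ ev 1) (hN₀ : v (1 - b * u₀' + a * c * u₀' ^ 2) = ev 1)
    (hu₀' : v u₀' ≤ ev 0)
    (hY₁ : ∀ y ∈ Y₁, v y ≤ ev 0 ∧ ¬ v (y - u₀') ≤ ev 1) (hY₂ : ∀ y ∈ Y₂, v y ≤ ev 1)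
    (hY₂rep : ∀ y : F, v y ≤ ev 1 → ∃! r, r ∈ Y₂ ∧ v (y - r) ≤ ev ((C : ℤ) + 1))
    (hY₃ : ∀ x ∈ Y₃, v x ≤ ev 1) {w : F} (hw : v w ≤ ev 0) (hwu : v (w - u₀') ≤ ev 1) :
    ∃! m, IsCosetRep a b c u₀' Y₁ Y₂ Y₃ m ∧ MemCoset v a b c n C m (tmat a b c 1 w) := by
  have hC : (1 : ℤ) ≤ C := by exact_mod_cast hn.trans hnC
  have hac : v (a * c) ≤ ev 0 := by simp [ha, hc]
  have hcoset := fun {x y : F} (h : x ≠ 0 ∨ y ≠ 0) =>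
    memCoset_tmat_one_iff (n := n) hc ha.le hb hn hnC hd (w := w) h
  have hshift : ∀ s, v s ≤ ev 1 → v (u₀' + s) ≤ ev 0 := fun s hs =>
    v.map_add_le hu₀' (valuation_le_ev_of_le hs zero_le_one)
  have hsub : ∀ s : F, w - (u₀' + s) = w - u₀' - s := fun s => by ring
  obtain ⟨s, ⟨hsY, hws⟩, hs_uniq⟩ := hY₂rep (w - u₀') hwu
  refine ⟨tmat a b c 1 (u₀' + s), ⟨Or.inr (Or.inl ⟨s, hsY, rfl⟩), ?_⟩, ?_⟩
  · rw [hcoset (Or.inl one_ne_zero), one_mul, valuation_one_sub_add_eq_ev_one hB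
      (hshift s (hY₂ s hsY)) hac hN₀ (by simpa using hY₂ s hsY)
      (by rw [hsub]; exact valuation_le_ev_of_le hws (by omega)), ← ev_add, hsub]
    exact hws
  rintro _ ⟨⟨r, hr, rfl⟩ | ⟨s', hs', rfl⟩ | ⟨x, hx, rfl⟩, hm⟩
  · rw [hcoset (Or.inl one_ne_zero), one_mul] at hm
    have hru := eq_ev_zero_of_not_le (v.map_sub_le (hY₁ r hr).1 hu₀') (hY₁ r hr).2
    refine absurd hm (not_le_ev_mul_of_unit (hn.trans hnC) ?_
      (valuation_one_sub_add_le_one hac hb (hY₁ r hr).1 hw))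
    rw [v.map_sub_swap, show r - w = (r - u₀') - (w - u₀') by ring]
    exact valuation_sub_eq_of_le hru hwu
  · rw [hcoset (Or.inl one_ne_zero), one_mul] at hm
    rw [hs_uniq s' ⟨hs', ?_⟩]
    have := hm.trans (mul_le_mul' le_rfl (valuation_one_sub_add_le_ev_one hB
      (hshift s' (hY₂ s' hs')) hac hN₀.le (by simpa using hY₂ s' hs')
      (by rw [hsub]; exact v.map_sub_le hwu (hY₂ s' hs'))))
    rwa [← ev_add, hsub] at this
  · exact absurd hm (not_memCoset_tmat_mem_one hc ha hb hn hnC hd hw (hY₃ x hx))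

lemma existsUnique_rep_of_mem_maximalIdeal (hc : v c = ev 0) (ha : v a = ev 0) (hb : v b ≤ ev 0)
    (hn : 1 ≤ n) (hnC : n ≤ C) (hd : ∀ r : F, r ^ 2 ≠ b ^ 2 - 4 * (a * c)) (hu₀' : v u₀' ≤ ev 0)
    (hY₁ : ∀ y ∈ Y₁, v y ≤ ev 0 ∧ ¬ v (y - u₀') ≤ ev 1) (hY₂ : ∀ y ∈ Y₂, v y ≤ ev 1)
    (hY₃ : ∀ x ∈ Y₃, v x ≤ ev 1) (hY₃rep : ∀ x : F, v x ≤ ev 1 → ∃! r, r ∈ Y₃ ∧ v (x - r) ≤ ev C)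
    {p : F} (hp : v p ≤ ev 1) :
    ∃! m, IsCosetRep a b c u₀' Y₁ Y₂ Y₃ m ∧ MemCoset v a b c n C m (tmat a b c p 1) := by
  have hcoset : ∀ x, v x ≤ ev 1 →
      (MemCoset v a b c n C (tmat a b c x 1) (tmat a b c p 1) ↔ v (p - x) ≤ ev C) := by
    intro x hx
    have hX : v (p * x - b * (p * 1) + a * c * (1 * 1)) = ev 0 := by
      have hac : v (a * c * (1 * 1)) = ev 0 := by simp [ha, hc]
      rw [v.map_add_eq_of_lt_right, hac]
      refine hac ▸ (v.map_sub_le ?_ ?_).trans_lt (ev_lt_ev.mpr one_pos)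
      · exact valuation_le_ev_of_le (valuation_mul_le_ev hp hx) (by norm_num)
      · simpa using valuation_mul_le_ev hb hp
    rw [memCoset_tmat_iff hc ha.le hb hn hnC (norm_ne_zero_of_forall_sq_ne hd (Or.inr one_ne_zero))
      (norm_ne_zero_of_forall_sq_ne hd (Or.inr one_ne_zero)), hX, ev_zero, mul_one, v.map_sub_swap]
    simp
  obtain ⟨x, ⟨hxY, hpx⟩, hx_uniq⟩ := hY₃rep p hp
  refine ⟨tmat a b c x 1, ⟨Or.inr (Or.inr ⟨x, hxY, rfl⟩), (hcoset x (hY₃ x hxY)).mpr hpx⟩, ?_⟩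
  rintro _ ⟨⟨r, hr, rfl⟩ | ⟨s, hs, rfl⟩ | ⟨x', hx', rfl⟩, hm⟩
  · exact absurd hm (not_memCoset_tmat_one_mem hc ha hb hn hnC hd hp (hY₁ r hr).1)
  · exact absurd hm (not_memCoset_tmat_one_mem hc ha hb hn hnC hd hp
      (v.map_add_le hu₀' (valuation_le_ev_of_le (hY₂ s hs) zero_le_one)))
  · rw [hx_uniq x' ⟨hx', (hcoset x' (hY₃ x' hx')).mp hm⟩]

lemma existsUnique_rep (hc : v c = ev 0) (ha : v a = ev 0) (hb : v b ≤ ev 0) (hn : 1 ≤ n)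
    (hnC : n ≤ C) (hd : ∀ r : F, r ^ 2 ≠ b ^ 2 - 4 * (a * c))
    (hB : v (b - 2 * a * c * u₀') ≤ ev 1) (hN₀ : v (1 - b * u₀' + a * c * u₀' ^ 2) = ev 1)
    (hu₀' : v u₀' ≤ ev 0)
    (hY₁ : ∀ y ∈ Y₁, v y ≤ ev 0 ∧ ¬ v (y - u₀') ≤ ev 1)
    (hY₁rep : ∀ y : F, v y ≤ ev 0 → ¬ v (y - u₀') ≤ ev 1 → ∃! r, r ∈ Y₁ ∧ v (y - r) ≤ ev C)
    (hY₂ : ∀ y ∈ Y₂, v y ≤ ev 1)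
    (hY₂rep : ∀ y : F, v y ≤ ev 1 → ∃! r, r ∈ Y₂ ∧ v (y - r) ≤ ev ((C : ℤ) + 1))
    (hY₃ : ∀ x ∈ Y₃, v x ≤ ev 1) (hY₃rep : ∀ x : F, v x ≤ ev 1 → ∃! r, r ∈ Y₃ ∧ v (x - r) ≤ ev C)
    {g : Matrix (Fin 2) (Fin 2) F} (hg : g ∈ TSet a b c) :
    ∃! m, IsCosetRep a b c u₀' Y₁ Y₂ Y₃ m ∧ MemCoset v a b c n C m g := by
  obtain ⟨x, y, hN, rfl⟩ := hg
  rcases le_or_gt (v y) (v x) with hyx | hxy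
  · have hx : x ≠ 0 := by
      rintro rfl
      simp_all
    have hw : v (y / x) ≤ ev 0 := (valuation_div_le_ev_iff hx).mpr (by simpa using hyx)
    rw [show tmat a b c x y = x • tmat a b c 1 (y / x) by rw [smul_tmat]; field_simp]
    simp only [memCoset_smul_iff hx]
    by_cases hwu : v (y / x - u₀') ≤ ev 1
    · exact existsUnique_rep_of_mem hc ha hb hn hnC hd hB hN₀ hu₀' hY₁ hY₂ hY₂rep hY₃ hw hwu
    · exact existsUnique_rep_of_unit hc ha hb hn hnC hd hB hN₀.le hu₀' hY₁ hY₁rep hY₂ hY₃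
        hw (eq_ev_zero_of_not_le (v.map_sub_le hw hu₀') hwu)
  · have hy : y ≠ 0 := by
      rintro rfl
      simp at hxy
    have hp : v (x / y) < ev 0 := by
      rw [map_div₀, ev_zero, div_lt_one₀ (zero_lt_iff.mpr ((Valuation.ne_zero_iff v).mpr hy))]
      exact hxy
    rw [show tmat a b c x y = y • tmat a b c (x / y) 1 by rw [smul_tmat]; field_simp]
    simp only [memCoset_smul_iff hy]
    exact existsUnique_rep_of_mem_maximalIdeal hc ha hb hn hnC hd hu₀' hY₁ hY₂ hY₃ hY₃rep
      (by simpa using le_ev_add_one_of_lt hp)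

end Representatives

theorem stmt16_general
    {L : Type*} [Field L] [CharZero F] [Algebra F L]
    (v : Valuation F Zm0) (vL : Valuation L Zm0)
    (ϖ : F) (hϖ : v ϖ = ev 1)
    (ϖL : L) (hϖL : vL ϖL = ev 1)
    (a b c : F)
    (hbo : v b ≤ ev 0) (hc : v c = ev 0)
    (hnonsq : ∀ r : F, r ^ 2 ≠ b ^ 2 - 4 * (a * c))
    (sqd : L) (hsqd : sqd ^ 2 = algebraMap F L (b ^ 2 - 4 * (a * c)))
    (β : L) (hβ : β = (algebraMap F L b + sqd) / (2 * algebraMap F L c))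
    -- {1, β} is an 𝔬-basis of 𝔬_L :
    (hbasis : ∀ z : L, vL z ≤ ev 0 ↔
      ∃ s t : F, v s ≤ ev 0 ∧ v t ≤ ev 0 ∧ z = algebraMap F L s + algebraMap F L t * β)
    -- v_L restricted to F is e·v for the ramification index e ≥ 1 :
    (hcomp : ∃ e : ℕ, 0 < e ∧ ∀ x : F, vL (algebraMap F L x) = (v x) ^ e)
    (n C : ℕ) (hn : 1 ≤ n) (hnC : n ≤ C)
    -- L/F is ramified and v(a) = 0 :
    (hram : vL (algebraMap F L ϖ) = ev 2) (hva : v a = ev 0)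
    -- u₀ ∈ 𝔬 with c·u₀² + b·u₀ + a ∈ 𝔭, and u₀' = −u₀/a :
    (u₀ : F) (hu₀o : v u₀ ≤ ev 0) (hu₀ : v (c * u₀ ^ 2 + b * u₀ + a) ≤ ev 1)
    (u₀' : F) (hu₀' : u₀' = -u₀ / a)
    -- Y₁ is a set of representatives of { y ∈ 𝔬/𝔭^C : y − u₀' ∉ 𝔭 } :
    (Y₁ : Finset F) (hY₁ : ∀ y ∈ Y₁, v y ≤ ev 0 ∧ ¬ v (y - u₀') ≤ ev 1)
    (hY₁rep : ∀ y : F, v y ≤ ev 0 → ¬ v (y - u₀') ≤ ev 1 → ∃! r, r ∈ Y₁ ∧ v (y - r) ≤ ev C)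
    -- Y₂ is a set of representatives of 𝔭/𝔭^{C+1} :
    (Y₂ : Finset F) (hY₂ : ∀ y ∈ Y₂, v y ≤ ev 1)
    (hY₂rep : ∀ y : F, v y ≤ ev 1 → ∃! r, r ∈ Y₂ ∧ v (y - r) ≤ ev ((C : ℤ) + 1))
    -- Y₃ is a set of representatives of 𝔭/𝔭^C :
    (Y₃ : Finset F) (hY₃ : ∀ x ∈ Y₃, v x ≤ ev 1)
    (hY₃rep : ∀ x : F, v x ≤ ev 1 → ∃! r, r ∈ Y₃ ∧ v (x - r) ≤ ev C) :
    ∀ g ∈ TSet a b c, ∃! m : Matrix (Fin 2) (Fin 2) F,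
      ((∃ y ∈ Y₁, m = tmat a b c 1 y)
        ∨ (∃ y ∈ Y₂, m = tmat a b c 1 (u₀' + y))
        ∨ (∃ x ∈ Y₃, m = tmat a b c x 1))
      ∧ ∃ u ∈ TSet a b c ∩ (ZF F * Kp v n C), g = m * u := by
  obtain ⟨e, -, hcomp⟩ := hcomp
  obtain rfl : e = 2 := by
    have := hcomp ϖ
    rw [hram, hϖ, ev_pow, ev_injective.eq_iff] at this
    omega
  obtain ⟨hE, hB⟩ := eisenstein_of_ramified hc hsqd hβ (fun z => (hbasis z).mp) hcomp hϖL hu₀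
  have ha0 : a ≠ 0 := (Valuation.ne_zero_iff v).mp (hva ▸ ev_ne_zero 0)
  have hN₀ : v (1 - b * u₀' + a * c * u₀' ^ 2) = ev 1 := by
    rw [show 1 - b * u₀' + a * c * u₀' ^ 2 = (c * u₀ ^ 2 + b * u₀ + a) / a by
      rw [hu₀']; field_simp; ring, map_div₀, hva, hE, ev_zero, div_one]
  have hB' : v (b - 2 * a * c * u₀') ≤ ev 1 := by
    rwa [show b - 2 * a * c * u₀' = 2 * c * u₀ + b by rw [hu₀']; field_simp; ring]
  have hu₀'o : v u₀' ≤ ev 0 := by rwa [hu₀', map_div₀, Valuation.map_neg, hva, ev_zero, div_one]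
  exact fun g hg => existsUnique_rep hc hva hbo hn hnC hnonsq hB' hN₀ hu₀'o hY₁ hY₁rep hY₂ hY₂rep
    hY₃ hY₃rep hg

/-- if L/F is ramified and v(a) = 0, with u₀ a root mod 𝔭 of cu² + bu + a and
u₀' = −u₀/a, then the elements t(1,y) for y running over representatives of
{ y ∈ 𝔬/𝔭^C : y − u₀' ∉ 𝔭 }, together with t(1, u₀' + y) for y over representatives of
𝔭/𝔭^{C+1}, together with t(x,1) for x over representatives of 𝔭/𝔭^C, form a complete
irredundant set of coset representatives for T(F) ∩ Z(F)·K' in T(F). -/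
theorem stmt16
    {L : Type*} [Field L] [CharZero F] [Algebra F L]
    (v : Valuation F Zm0) (vL : Valuation L Zm0)
    (ϖ : F) (hϖ : v ϖ = ev 1)
    (ϖL : L) (hϖL : vL ϖL = ev 1)
    (a b c : F)
    (hao : v a ≤ ev 0) (hbo : v b ≤ ev 0) (hc : v c = ev 0)
    (hd0 : b ^ 2 - 4 * (a * c) ≠ 0)
    (hnonsq : ∀ r : F, r ^ 2 ≠ b ^ 2 - 4 * (a * c))
    (sqd : L) (hsqd : sqd ^ 2 = algebraMap F L (b ^ 2 - 4 * (a * c)))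
    (hspan : ∀ z : L, ∃ s t : F, z = algebraMap F L s + algebraMap F L t * sqd)
    (β : L) (hβ : β = (algebraMap F L b + sqd) / (2 * algebraMap F L c))
    -- {1, β} is an 𝔬-basis of 𝔬_L :
    (hbasis : ∀ z : L, vL z ≤ ev 0 ↔
      ∃ s t : F, v s ≤ ev 0 ∧ v t ≤ ev 0 ∧ z = algebraMap F L s + algebraMap F L t * β)
    -- v_L restricted to F is e·v for the ramification index e ≥ 1 :
    (hcomp : ∃ e : ℕ, 0 < e ∧ ∀ x : F, vL (algebraMap F L x) = (v x) ^ e)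
    (n C : ℕ) (hn : 1 ≤ n) (hnC : n ≤ C)
    -- L/F is ramified and v(a) = 0 :
    (hram : vL (algebraMap F L ϖ) = ev 2) (hva : v a = ev 0)
    -- u₀ ∈ 𝔬 with c·u₀² + b·u₀ + a ∈ 𝔭, and u₀' = −u₀/a :
    (u₀ : F) (hu₀o : v u₀ ≤ ev 0) (hu₀ : v (c * u₀ ^ 2 + b * u₀ + a) ≤ ev 1)
    (u₀' : F) (hu₀' : u₀' = -u₀ / a)
    -- Y₁ is a set of representatives of { y ∈ 𝔬/𝔭^C : y − u₀' ∉ 𝔭 } :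
    (Y₁ : Finset F) (hY₁ : ∀ y ∈ Y₁, v y ≤ ev 0 ∧ ¬ v (y - u₀') ≤ ev 1)
    (hY₁rep : ∀ y : F, v y ≤ ev 0 → ¬ v (y - u₀') ≤ ev 1 → ∃! r, r ∈ Y₁ ∧ v (y - r) ≤ ev C)
    -- Y₂ is a set of representatives of 𝔭/𝔭^{C+1} :
    (Y₂ : Finset F) (hY₂ : ∀ y ∈ Y₂, v y ≤ ev 1)
    (hY₂rep : ∀ y : F, v y ≤ ev 1 → ∃! r, r ∈ Y₂ ∧ v (y - r) ≤ ev ((C : ℤ) + 1))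
    -- Y₃ is a set of representatives of 𝔭/𝔭^C :
    (Y₃ : Finset F) (hY₃ : ∀ x ∈ Y₃, v x ≤ ev 1)
    (hY₃rep : ∀ x : F, v x ≤ ev 1 → ∃! r, r ∈ Y₃ ∧ v (x - r) ≤ ev C) :
    ∀ g ∈ TSet a b c, ∃! m : Matrix (Fin 2) (Fin 2) F,
      ((∃ y ∈ Y₁, m = tmat a b c 1 y)
        ∨ (∃ y ∈ Y₂, m = tmat a b c 1 (u₀' + y))
        ∨ (∃ x ∈ Y₃, m = tmat a b c x 1))
      ∧ ∃ u ∈ TSet a b c ∩ (ZF F * Kp v n C), g = m * u :=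
  stmt16_general v vL ϖ hϖ ϖL hϖL a b c hbo hc hnonsq sqd hsqd β hβ hbasis hcomp n C hn hnC hram hva
    u₀ hu₀o hu₀ u₀' hu₀' Y₁ hY₁ hY₁rep Y₂ hY₂ hY₂rep Y₃ hY₃ hY₃rep
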